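/- arXiv:0903.2810 — 5 statements merged into one kernel-verified Lean document; each statement's English description precedes it below -/
import Mathlib

section
/- Let G be a finite abelian group, H ≤ G a subgroup, and A ⊆ ℤ nonempty. Then D_A(G) ≥ D_A(H) + D_A(G/H) − 1. -/
/-- Weighted sum of a multiset of (weight, element) pairs. -/
def wSum {G : Type*} [AddCommGroup G] (T : Multiset (ℤ × G)) : G :=
  (T.map fun p => p.1 • p.2).sum

/-- The weighted Davenport constant `D_A(G)`. -/
noncomputable def DW (A : Set ℤ) (G : Type*) [AddCommGroup G] : ℕ :=
  sInf {ℓ | ∀ S : Multiset G, S.card = ℓ →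
    ∃ T : Multiset (ℤ × G), T ≠ 0 ∧ T.map Prod.snd ≤ S ∧ (∀ p ∈ T, p.1 ∈ A) ∧ wSum T = 0}

/-!
Call a sequence free if it has no nonempty weighted zero-sum subsequence, so that a longest free
sequence over `K` has length `D_A(K) - 1`. Given longest free sequences `S₁` over `H` and `S₂` over
`G ⧸ H`, the sequence formed by `S₁` together with representatives in `G` of the terms of `S₂` is
free over `G`, hence has length at most `D_A(G) - 1`.
-/

section WeightedZeroSum

variable {K : Type*} [AddCommGroup K] {A : Set ℤ}

def HasWeightedZeroSum (A : Set ℤ) (S : Multiset K) : Prop :=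
  ∃ T : Multiset (ℤ × K), T ≠ 0 ∧ T.map Prod.snd ≤ S ∧ (∀ p ∈ T, p.1 ∈ A) ∧ wSum T = 0

lemma wSum_add (T T' : Multiset (ℤ × K)) : wSum (T + T') = wSum T + wSum T' := by
  simp [wSum]

lemma wSum_map {K' : Type*} [AddCommGroup K'] (f : K →+ K') (T : Multiset (ℤ × K)) :
    wSum (T.map (Prod.map id f)) = f (wSum T) := by
  simp [wSum, map_multiset_sum, Multiset.map_map, map_zsmul]

lemma wSum_map_const (a : ℤ) (U : Multiset K) : wSum (U.map (a, ·)) = a • U.sum := by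
  simp [wSum, Multiset.map_map, Multiset.smul_sum]

lemma HasWeightedZeroSum.mono {S S' : Multiset K} (h : HasWeightedZeroSum A S) (hS : S ≤ S') :
    HasWeightedZeroSum A S' := by
  obtain ⟨T, hT0, hTS, hTA, hT⟩ := h
  exact ⟨T, hT0, hTS.trans hS, hTA, hT⟩

lemma not_hasWeightedZeroSum_zero : ¬ HasWeightedZeroSum A (0 : Multiset K) := by
  rintro ⟨T, hT0, hTS, -, -⟩
  exact hT0 (Multiset.map_eq_zero.mp (nonpos_iff_eq_zero.mp hTS))

lemma hasWeightedZeroSum_of_zero_mem {a : ℤ} (ha : a ∈ A) {S : Multiset K} (h0 : (0 : K) ∈ S) :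
    HasWeightedZeroSum A S :=
  ⟨{(a, 0)}, Multiset.singleton_ne_zero _, by simpa using h0, by simpa using ha,
    by simp [wSum]⟩

/-- Pigeonhole on the `a`-multiples of the `|K| + 1` prefix sums of `S`: two of them agree, and
their difference is a nonempty block of `S` whose sum is killed by `a`. -/
lemma hasWeightedZeroSum_of_card_le [Finite K] {a : ℤ} (ha : a ∈ A) {S : Multiset K}
    (hS : Nat.card K ≤ S.card) : HasWeightedZeroSum A S := by
  classical
  cases nonempty_fintype K
  let P : Fin (Nat.card K + 1) → Multiset K := fun k => S.toList.take k
  have hP_mono {i j : Fin (Nat.card K + 1)} (hij : i ≤ j) : P i ≤ P j :=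
    Multiset.coe_le.mpr (List.take_sublist_take_left hij).subperm
  have hP_le (k) : P k ≤ S := by
    simpa [P] using Multiset.coe_le.mpr (List.take_sublist k S.toList).subperm
  have hP_card (k : Fin (Nat.card K + 1)) : (P k).card = k := by
    simp only [P, Multiset.coe_card, List.length_take, Multiset.length_toList]
    omega
  obtain ⟨i, j, hij, heq⟩ := Fintype.exists_ne_map_eq_of_card_lt (fun k => a • (P k).sum)
    (by simp [Nat.card_eq_fintype_card])
  wlog hlt : i < j generalizing i j
  · exact this j i hij.symm heq.symm (lt_of_le_of_ne (not_lt.mp hlt) hij.symm)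
  refine ⟨(P j - P i).map (a, ·), ?_, ?_, ?_, ?_⟩
  · rw [ne_eq, Multiset.map_eq_zero, ← Multiset.card_eq_zero,
      Multiset.card_sub (hP_mono hlt.le), hP_card, hP_card]
    omega
  · simpa [Multiset.map_map, Function.comp_def] using tsub_le_self.trans (hP_le j)
  · simp [ha]
  · have : a • (P i).sum = a • (P i + (P j - P i)).sum := by
      rwa [add_tsub_cancel_of_le (hP_mono hlt.le)]
    rw [Multiset.sum_add, smul_add, left_eq_add] at this
    rwa [wSum_map_const]

lemma HasWeightedZeroSum.of_DW_le [Finite K] (hA : A.Nonempty) {S : Multiset K}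
    (hS : DW A K ≤ S.card) : HasWeightedZeroSum A S := by
  obtain ⟨a, ha⟩ := hA
  have hmem : ∀ S : Multiset K, S.card = DW A K → HasWeightedZeroSum A S :=
    Nat.sInf_mem (s := {ℓ | ∀ S : Multiset K, S.card = ℓ → HasWeightedZeroSum A S})
      ⟨Nat.card K, fun _ hS => hasWeightedZeroSum_of_card_le ha hS.ge⟩
  let S' : Multiset K := S.toList.take (DW A K)
  have hS' : S' ≤ S := by
    simpa [S'] using Multiset.coe_le.mpr (List.take_sublist (DW A K) S.toList).subperm
  exact (hmem S' (by simp [S', hS])).mono hS'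

lemma exists_card_add_one_eq_DW [Finite K] (hA : A.Nonempty) :
    ∃ S : Multiset K, ¬ HasWeightedZeroSum A S ∧ S.card + 1 = DW A K := by
  have hpos : 0 < DW A K := Nat.pos_of_ne_zero fun h =>
    not_hasWeightedZeroSum_zero (HasWeightedZeroSum.of_DW_le (S := 0) hA h.le)
  have hlt : DW A K - 1 ∉ {ℓ | ∀ S : Multiset K, S.card = ℓ → HasWeightedZeroSum A S} :=
    Nat.notMem_of_lt_sInf (Nat.sub_lt hpos one_pos)
  obtain ⟨S, hS, hfree⟩ : ∃ S : Multiset K, S.card = DW A K - 1 ∧ ¬ HasWeightedZeroSum A S := by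
    simpa using hlt
  exact ⟨S, hfree, by omega⟩

lemma HasWeightedZeroSum.of_map_injective {K' : Type*} [AddCommGroup K'] {f : K →+ K'}
    (hf : Function.Injective f) {S : Multiset K} (h : HasWeightedZeroSum A (S.map f)) :
    HasWeightedZeroSum A S := by
  obtain ⟨T, hT0, hTS, hTA, hT⟩ := h
  have hinv : ∀ p ∈ T, f (Function.invFun f p.2) = p.2 := fun p hp => by
    obtain ⟨x, -, hx⟩ := Multiset.mem_map.mp (Multiset.mem_of_le hTS (Multiset.mem_map_of_mem _ hp))
    exact Function.invFun_eq ⟨x, hx⟩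
  let T' := T.map (Prod.map id (Function.invFun f))
  have hT' : T'.map (Prod.map id f) = T := by
    rw [Multiset.map_map]
    conv_rhs => rw [← Multiset.map_id T]
    exact Multiset.map_congr rfl fun p hp => Prod.ext rfl (hinv p hp)
  refine ⟨T', by simpa [T'] using hT0, ?_, fun q hq => ?_, ?_⟩
  · simpa [T', Multiset.map_map, Function.comp_def, Function.leftInverse_invFun hf _]
      using Multiset.map_le_map (f := Function.invFun f) hTS
  · obtain ⟨r, hr, rfl⟩ := Multiset.mem_map.mp hq
    exact hTA r hr
  · apply hf
    rw [← wSum_map, hT', hT, map_zero]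

lemma wSum_mem (H : AddSubgroup K) {T : Multiset (ℤ × K)}
    (hT : ∀ p ∈ T, p.2 ∈ H) : wSum T ∈ H :=
  H.multiset_sum_mem _ fun _ hx => by
    obtain ⟨p, hp, rfl⟩ := Multiset.mem_map.mp hx
    exact zsmul_mem (hT p hp) _

end WeightedZeroSum

lemma Multiset.le_of_le_add_of_disjoint {α : Type*} {u s t : Multiset α} (h : u ≤ s + t)
    (hd : Disjoint u s) : u ≤ t := by
  classical
  refine Multiset.le_iff_count.mpr fun a => ?_
  by_cases ha : a ∈ u
  · have hs := Multiset.count_eq_zero.mpr (Multiset.disjoint_left.mp hd ha)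
    have hu := Multiset.le_iff_count.mp h a
    rw [Multiset.count_add] at hu
    omega
  · simp [Multiset.count_eq_zero.mpr ha]

lemma out_notMem_of_not_hasWeightedZeroSum {G : Type*} [AddCommGroup G] {H : AddSubgroup G}
    {A : Set ℤ} {a : ℤ} (ha : a ∈ A) {S : Multiset (G ⧸ H)} (hS : ¬ HasWeightedZeroSum A S) :
    ∀ x ∈ S.map Quotient.out, x ∉ H := by
  rintro _ hx hxH
  obtain ⟨q, hq, rfl⟩ := Multiset.mem_map.mp hx
  refine hS (hasWeightedZeroSum_of_zero_mem ha ?_)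
  rwa [← QuotientAddGroup.out_eq' q, (QuotientAddGroup.eq_zero_iff _).mpr hxH] at hq

/-- The part of a weighted zero sum lying outside `H` projects to a weighted zero sum in `G ⧸ H`,
so it is empty, and what remains is a weighted zero sum in `H`. -/
lemma not_hasWeightedZeroSum_map_subtype_add_map_out {G : Type*} [AddCommGroup G]
    {H : AddSubgroup G} {A : Set ℤ} {S₁ : Multiset H} {S₂ : Multiset (G ⧸ H)}
    (h₁ : ¬ HasWeightedZeroSum A S₁) (h₂ : ¬ HasWeightedZeroSum A S₂) :
    ¬ HasWeightedZeroSum A (S₁.map H.subtype + S₂.map Quotient.out) := by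
  classical
  rintro ⟨T, hT0, hTS, hTA, hT⟩
  obtain ⟨p, hp⟩ := Multiset.exists_mem_of_ne_zero hT0
  have hS₁ : ∀ x ∈ S₁.map H.subtype, x ∈ H := fun x hx => by
    obtain ⟨y, -, rfl⟩ := Multiset.mem_map.mp hx
    exact y.2
  have hS₂ := out_notMem_of_not_hasWeightedZeroSum (hTA p hp) h₂
  set T₁ := T.filter (·.2 ∈ H)
  set T₂ := T.filter (·.2 ∉ H)
  have hT₂ : T₂ = 0 := by
    by_contra hne
    refine h₂ ⟨T₂.map (Prod.map id (QuotientAddGroup.mk' H)), by simpa using hne, ?_,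
      fun q hq => ?_, ?_⟩
    · have hT₂S : T₂.map Prod.snd ≤ S₂.map Quotient.out :=
        Multiset.le_of_le_add_of_disjoint
          ((Multiset.map_le_map (Multiset.filter_le _ T)).trans hTS)
          (Multiset.disjoint_left.mpr fun hx hx₁ => by
            obtain ⟨p, hp, rfl⟩ := Multiset.mem_map.mp hx
            exact (Multiset.mem_filter.mp hp).2 (hS₁ _ hx₁))
      simpa [Multiset.map_map, Function.comp_def] using
        Multiset.map_le_map (f := QuotientAddGroup.mk' H) hT₂S
    · obtain ⟨r, hr, rfl⟩ := Multiset.mem_map.mp hq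
      exact hTA r (Multiset.mem_of_le (Multiset.filter_le _ T) hr)
    · have hsum : wSum T₁ + wSum T₂ = 0 := by rw [← wSum_add, Multiset.filter_add_not, hT]
      have hT₁ : wSum T₁ ∈ H := wSum_mem H fun p hp => (Multiset.mem_filter.mp hp).2
      rw [wSum_map, QuotientAddGroup.mk'_apply, QuotientAddGroup.eq_zero_iff,
        eq_neg_of_add_eq_zero_right hsum]
      exact neg_mem hT₁
  have hTH : ∀ p ∈ T, p.2 ∈ H := by simpa [T₂, Multiset.filter_eq_nil] using hT₂
  refine h₁ (HasWeightedZeroSum.of_map_injective H.subtype_injective ⟨T, hT0, ?_, hTA, hT⟩)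
  refine Multiset.le_of_le_add_of_disjoint (hTS.trans_eq (add_comm _ _))
    (Multiset.disjoint_left.mpr fun hx hx₂ => ?_)
  obtain ⟨p, hp, rfl⟩ := Multiset.mem_map.mp hx
  exact hS₂ _ hx₂ (hTH p hp)

/-- `D_A(G) ≥ D_A(H) + D_A(G/H) − 1`, stated additively to avoid truncated
subtraction. -/
theorem DW_subgroup_quotient (G : Type*) [AddCommGroup G] [Fintype G]
    (H : AddSubgroup G) (A : Set ℤ) (hA : A.Nonempty) :
    DW A H + DW A (G ⧸ H) ≤ DW A G + 1 := by
  obtain ⟨S₁, h₁, hS₁⟩ := exists_card_add_one_eq_DW (K := H) hA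
  obtain ⟨S₂, h₂, hS₂⟩ := exists_card_add_one_eq_DW (K := G ⧸ H) hA
  have hlt : (S₁.map H.subtype + S₂.map Quotient.out).card < DW A G :=
    not_le.mp (mt (HasWeightedZeroSum.of_DW_le hA)
      (not_hasWeightedZeroSum_map_subtype_add_map_out h₁ h₂))
  rw [Multiset.card_add, Multiset.card_map, Multiset.card_map] at hlt
  omega
end

section
/- Let G be a finite abelian group with exponent m, let A ⊆ ℤ be nonempty, fix a_0 ∈ A, and let d = gcd of the set (A − a_0) ∪ {m}. Then for every g ∈ G with d·g = 0, every sequence S = s_1⋯s_N over G, and every n ≤ N: the set of weighted n-sums of the translated sequence g + S equals n·a_0·g plus the set of weighted n-sums of S. That is, Σ_n(A, g+S) = n a_0 g + Σ_n(A, S), where Σ_n(A, S) = { Σ_{i=1}^n w_i t_i : t_1⋯t_n a subsequence of S of length n, w_i ∈ A }. -/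
/-!
Every weight `w ∈ A` is congruent to `a₀` modulo `d`, so `w • g = a₀ • g` when `d • g = 0`.
Translating the `n` terms of a weighted `n`-sum by `g` therefore shifts it by exactly `n a₀ g`,
whatever the weights are; translating back by `-g` gives the reverse inclusion.
-/

open scoped Pointwise

/-- The set `Σ_n(A, S)` of weighted `n`-sums of the sequence `S` with weights in `A`. -/
def sigmaN {G : Type*} [AddCommGroup G] (A : Set ℤ) (n : ℕ) (S : Multiset G) : Set G :=
  {g | ∃ T : Multiset (ℤ × G), T.card = n ∧ T.map Prod.snd ≤ S ∧
    (∀ p ∈ T, p.1 ∈ A) ∧ wSum T = g}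

section Translate

variable {G : Type*} [AddCommGroup G]

lemma wSum_map_add (c : G) (T : Multiset (ℤ × G)) :
    wSum (T.map fun p => (p.1, c + p.2)) = (T.map Prod.fst).sum • c + wSum T := by
  simp only [wSum, Multiset.map_map, Function.comp_def, smul_add, Multiset.sum_map_add,
    Multiset.sum_smul]

lemma zsmul_eq_zsmul_of_dvd_sub {d w a : ℤ} {g : G} (hg : d • g = 0) (h : d ∣ w - a) :
    w • g = a • g := by
  obtain ⟨k, hk⟩ := h
  rw [← sub_eq_zero, ← sub_smul, hk, mul_comm, mul_smul, hg, smul_zero]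

variable {A : Set ℤ} {a₀ : ℤ} {g : G}

lemma sum_fst_smul_eq_card_smul (hA : ∀ w ∈ A, w • g = a₀ • g) {T : Multiset (ℤ × G)}
    (hT : ∀ p ∈ T, p.1 ∈ A) : (T.map Prod.fst).sum • g = ((T.card : ℤ) * a₀) • g := by
  rw [Multiset.sum_smul, Multiset.map_map, Function.comp_def,
    Multiset.map_congr rfl fun p hp => hA p.1 (hT p hp), Multiset.map_const',
    Multiset.sum_replicate, mul_smul, natCast_zsmul]

lemma vadd_sigmaN_subset_sigmaN_map_add (hA : ∀ w ∈ A, w • g = a₀ • g) (n : ℕ)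
    (S : Multiset G) : ((n : ℤ) * a₀) • g +ᵥ sigmaN A n S ⊆ sigmaN A n (S.map (g + ·)) := by
  rintro _ ⟨_, ⟨T, hcard, hle, hT, rfl⟩, rfl⟩
  refine ⟨T.map fun p => (p.1, g + p.2), by simp [hcard], ?_, ?_, ?_⟩
  · simpa only [Multiset.map_map, Function.comp_def] using Multiset.map_le_map (f := (g + ·)) hle
  · simpa only [Multiset.forall_mem_map_iff] using hT
  · rw [wSum_map_add, sum_fst_smul_eq_card_smul hA hT, hcard]
    rfl

lemma sigmaN_map_add (hA : ∀ w ∈ A, w • g = a₀ • g) (n : ℕ) (S : Multiset G) :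
    sigmaN A n (S.map (g + ·)) = ((n : ℤ) * a₀) • g +ᵥ sigmaN A n S := by
  have hA' : ∀ w ∈ A, w • -g = a₀ • -g := fun w hw => by rw [smul_neg, smul_neg, hA w hw]
  refine Set.Subset.antisymm ?_ (vadd_sigmaN_subset_sigmaN_map_add hA n S)
  rw [Set.subset_vadd_set_iff, ← smul_neg]
  simpa only [Multiset.map_map, Function.comp_def, neg_add_cancel_left, Multiset.map_id']
    using vadd_sigmaN_subset_sigmaN_map_add hA' n (S.map (g + ·))

end Translate

theorem sigmaN_translate_general (G : Type*) [AddCommGroup G]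
    (A : Set ℤ) (a₀ : ℤ) (d : ℤ)
    (hd : Ideal.span (insert (AddMonoid.exponent G : ℤ) ((· - a₀) '' A)) =
      Ideal.span {d})
    (g : G) (hg : d • g = 0) (S : Multiset G) (n : ℕ) :
    sigmaN A n (S.map (g + ·)) = (((n : ℤ) * a₀) • g) +ᵥ sigmaN A n S := by
  refine sigmaN_map_add (fun w hw => zsmul_eq_zsmul_of_dvd_sub hg ?_) n S
  rw [← Ideal.mem_span_singleton, ← hd]
  exact Ideal.subset_span (Set.mem_insert_of_mem _ ⟨w, hw, rfl⟩)

/-- Translation lemma: for `g ∈ G[d]`, `Σ_n(A, g + S) = n a₀ g + Σ_n(A, S)`. -/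
theorem sigmaN_translate (G : Type*) [AddCommGroup G] [Fintype G]
    (A : Set ℤ) (a₀ : ℤ) (ha₀ : a₀ ∈ A) (d : ℤ)
    (hd : Ideal.span (insert (AddMonoid.exponent G : ℤ) ((· - a₀) '' A)) =
      Ideal.span {d})
    (g : G) (hg : d • g = 0) (S : Multiset G) (n : ℕ) (hn : n ≤ S.card) :
    sigmaN A n (S.map (g + ·)) = (((n : ℤ) * a₀) • g) +ᵥ sigmaN A n S :=
  sigmaN_translate_general G A a₀ d hd g hg S n
end

section
/- Let G be an abelian group of exponent m, K ≤ G a subgroup, β ∈ G, and A ⊆ ℤ nonempty with gcd(A ∪ {m}) = 1. Set d = gcd((A − a_0) ∪ {m}) for some a_0 ∈ A. If g_1, g_2 ∈ G satisfy A·g_i ⊆ β + K for i = 1,2 (where A·g = {a g : a ∈ A}), then d g_1, d g_2 ∈ K and g_1 − g_2 ∈ K (i.e., g_1 and g_2 lie in a common coset α + K). -/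
/-!
For fixed `g`, the integers `n` with `n • g ∈ K` form an ideal of `ℤ` containing the exponent
of `G`. If `A · g ⊆ β + K`, this ideal contains every difference `a - a₀` with `a ∈ A`, hence `d`;
if `A · g₁, A · g₂ ⊆ β + K`, the ideal attached to `g₁ - g₂` contains `A`, hence `1`.
-/

namespace AddSubgroup

variable {G : Type*} [AddCommGroup G] (K : AddSubgroup G)

def zsmulIdeal (g : G) : Ideal ℤ :=
  toIntSubmodule (K.comap (zmultiplesHom G g))

@[simp]
theorem mem_zsmulIdeal {g : G} {n : ℤ} : n ∈ K.zsmulIdeal g ↔ n • g ∈ K := Iff.rfl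

theorem zsmul_mem_of_mem_span_insert_exponent {S : Set ℤ} {g : G} (hS : ∀ s ∈ S, s • g ∈ K)
    {n : ℤ} (hn : n ∈ Ideal.span (insert (AddMonoid.exponent G : ℤ) S)) : n • g ∈ K := by
  suffices Ideal.span (insert (AddMonoid.exponent G : ℤ) S) ≤ K.zsmulIdeal g from this hn
  rw [Ideal.span_le, Set.insert_subset_iff]
  refine ⟨?_, hS⟩
  simp [AddMonoid.exponent_nsmul_eq_zero, K.zero_mem]

variable {K} {β : G} {A : Set ℤ}

theorem sub_zsmul_mem_of_zsmul_sub_mem {g : G} (h : ∀ a ∈ A, a • g - β ∈ K) {a₀ : ℤ}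
    (ha₀ : a₀ ∈ A) : ∀ n ∈ (· - a₀) '' A, n • g ∈ K := by
  rintro _ ⟨a, ha, rfl⟩
  simpa [sub_smul] using K.sub_mem (h a ha) (h a₀ ha₀)

theorem zsmul_sub_mem_of_zsmul_sub_mem {g₁ g₂ : G} (h₁ : ∀ a ∈ A, a • g₁ - β ∈ K)
    (h₂ : ∀ a ∈ A, a • g₂ - β ∈ K) : ∀ a ∈ A, a • (g₁ - g₂) ∈ K := by
  intro a ha
  simpa [smul_sub] using K.sub_mem (h₁ a ha) (h₂ a ha)

end AddSubgroup

theorem coset_lemma_general (G : Type*) [AddCommGroup G]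
    (K : AddSubgroup G) (β : G) (A : Set ℤ)
    (hgcd1 : Ideal.span (insert (AddMonoid.exponent G : ℤ) A) = ⊤)
    (a₀ : ℤ) (ha₀ : a₀ ∈ A) (d : ℤ)
    (hd : Ideal.span (insert (AddMonoid.exponent G : ℤ) ((· - a₀) '' A)) =
      Ideal.span {d})
    (g₁ g₂ : G) (h₁ : ∀ a ∈ A, a • g₁ - β ∈ K) (h₂ : ∀ a ∈ A, a • g₂ - β ∈ K) :
    d • g₁ ∈ K ∧ d • g₂ ∈ K ∧ g₁ - g₂ ∈ K := by
  have hd_mem : d ∈ Ideal.span (insert (AddMonoid.exponent G : ℤ) ((· - a₀) '' A)) :=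
    hd ▸ Ideal.mem_span_singleton_self d
  have h_one : (1 : ℤ) ∈ Ideal.span (insert (AddMonoid.exponent G : ℤ) A) :=
    hgcd1 ▸ Submodule.mem_top
  refine ⟨?_, ?_, ?_⟩
  · exact K.zsmul_mem_of_mem_span_insert_exponent
      (AddSubgroup.sub_zsmul_mem_of_zsmul_sub_mem h₁ ha₀) hd_mem
  · exact K.zsmul_mem_of_mem_span_insert_exponent
      (AddSubgroup.sub_zsmul_mem_of_zsmul_sub_mem h₂ ha₀) hd_mem
  · simpa using K.zsmul_mem_of_mem_span_insert_exponent
      (AddSubgroup.zsmul_sub_mem_of_zsmul_sub_mem h₁ h₂) h_one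

/-- Coset lemma: if `A·g₁, A·g₂ ⊆ β + K` then `d g₁, d g₂ ∈ K` and `g₁ − g₂ ∈ K`. -/
theorem coset_lemma (G : Type*) [AddCommGroup G] [Fintype G]
    (K : AddSubgroup G) (β : G) (A : Set ℤ) (hA : A.Nonempty)
    (hgcd1 : Ideal.span (insert (AddMonoid.exponent G : ℤ) A) = ⊤)
    (a₀ : ℤ) (ha₀ : a₀ ∈ A) (d : ℤ)
    (hd : Ideal.span (insert (AddMonoid.exponent G : ℤ) ((· - a₀) '' A)) =
      Ideal.span {d})
    (g₁ g₂ : G) (h₁ : ∀ a ∈ A, a • g₁ - β ∈ K) (h₂ : ∀ a ∈ A, a • g₂ - β ∈ K) :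
    d • g₁ ∈ K ∧ d • g₂ ∈ K ∧ g₁ - g₂ ∈ K :=
  coset_lemma_general G K β A hgcd1 a₀ ha₀ d hd g₁ g₂ h₁ h₂
end

section
/- Let G be a finite abelian group and K ≤ G a nontrivial subgroup. Let 𝒜 = A_1⋯A_r be a setpartition over G (a sequence of finite nonempty subsets of G) with |A_i| ≥ 2 and each A_i contained in a single K-coset, for all i. If r ≥ |K| − 1, then there exist a nontrivial subgroup H ≤ K, a sub-setpartition 𝒜′ of 𝒜, and a sub-setpartition 𝒜″ of 𝒜′ such that: |𝒜″| = |H| − 1; |𝒜′| ≥ min{|𝒜|, |𝒜| − |K/H| + 2}; the sumset A over all sets in 𝒜″ has cardinality exactly |H|; and every set in 𝒜′ is contained in a single H-coset. -/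
open scoped Pointwise

/-!
Induction on `|K|`. The sumset `S = σ(𝒜)` lies in a single `K`-coset. If it fills that coset,
keep only the sets that enlarge the running sum (dropping the others merely translates it); there
are at most `|K| - 1` of them, and padding them up to `|K| - 1` sets gives `𝒜''` with `H = K`.

Otherwise let `H` be the stabilizer of `S`. Adding a set that does not lie in an `H`-coset to an
`H`-periodic partial sum with stabilizer `H` adds at least one whole `H`-coset. So if `e` sets
of `𝒜` do not lie in `H`-cosets, `|H| (1 + e) ≤ |S| ≤ |K| - |H|`, that is `e ≤ [K : H] - 2`.
Since `|𝒜| ≥ |K| - 1`, this forces `H ≠ ⊥`, and the sets lying in `H`-cosets are numerous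
enough to apply the induction hypothesis to `H`.
-/

open AddAction

theorem Multiset.exists_le_le_card_eq {α : Type*} [DecidableEq α] {s t : Multiset α} {n : ℕ}
    (hst : s ≤ t) (hs : card s ≤ n) (ht : n ≤ card t) : ∃ u, s ≤ u ∧ u ≤ t ∧ card u = n := by
  obtain ⟨v, hv⟩ : ∃ v, v ∈ powersetCard (n - card s) (t - s) := by
    refine card_pos_iff_exists_mem.mp ?_
    rw [card_powersetCard, card_sub hst]
    exact Nat.choose_pos (by omega)
  obtain ⟨hvle, hvcard⟩ := mem_powersetCard.mp hv
  refine ⟨s + v, le_add_right s v, ?_, by rw [card_add, hvcard]; omega⟩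
  calc s + v ≤ s + (t - s) := add_le_add_right hvle s
    _ = t := add_tsub_cancel_of_le hst

section Index

variable {G : Type*} [AddGroup G] {H' H K : AddSubgroup G}

theorem natCard_mul_relIndex (h : H ≤ K) : Nat.card H * H.relIndex K = Nat.card K := by
  rw [← AddSubgroup.relIndex_bot_left, AddSubgroup.relIndex_mul_relIndex _ _ _ bot_le h,
    AddSubgroup.relIndex_bot_left]

theorem card_le_natCard_of_subset_vadd [Finite G] {B : Finset G} {c : G}
    (h : (B : Set G) ⊆ c +ᵥ (H : Set G)) : B.card ≤ Nat.card H :=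
  calc B.card = (B : Set G).ncard := (Set.ncard_coe_finset B).symm
    _ ≤ (c +ᵥ (H : Set G)).ncard := Set.ncard_le_ncard h
    _ = Nat.card H := by rw [Set.ncard_vadd_set]; exact (Nat.card_coe_set_eq _).symm

theorem not_subset_vadd_bot [Finite G] {B : Finset G} (hB : 2 ≤ B.card) :
    ¬ ∃ c : G, (B : Set G) ⊆ c +ᵥ ((⊥ : AddSubgroup G) : Set G) := fun ⟨_, hc⟩ => by
  have := card_le_natCard_of_subset_vadd hc
  rw [AddSubgroup.card_bot] at this
  omega

theorem natCard_lt_of_two_le_relIndex [Finite G] (hHK : H ≤ K) (h : 2 ≤ H.relIndex K) :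
    Nat.card H < Nat.card K :=
  natCard_mul_relIndex hHK ▸ (Nat.lt_mul_iff_one_lt_right Nat.card_pos).mpr h

theorem natCard_sub_one_le_of_relIndex {r r₁ e : ℕ} (hHK : H ≤ K) (hr₁ : r₁ + e = r)
    (he : e + 2 ≤ H.relIndex K) (hr : Nat.card K - 1 ≤ r) : Nat.card H - 1 ≤ r₁ := by
  rw [← natCard_mul_relIndex hHK] at hr
  generalize Nat.card H = m at hr ⊢
  generalize H.relIndex K = b at hr he
  rcases m with _ | m
  · exact Nat.zero_le _
  · have : m ≤ m * b := Nat.le_mul_of_pos_right m (by omega)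
    rw [add_one_mul] at hr
    omega

theorem min_le_of_relIndex [Finite G] {r r₁ e A : ℕ} (hH' : H' ≠ ⊥) (hH'H : H' ≤ H)
    (hHK : H ≤ K) (hr₁ : r₁ + e = r) (he : e + 2 ≤ H.relIndex K) (hr : Nat.card K - 1 ≤ r)
    (h : min r₁ (r₁ - H'.relIndex H + 2) ≤ A) : min r (r - H'.relIndex K + 2) ≤ A := by
  rw [← natCard_mul_relIndex (hH'H.trans hHK),
    ← AddSubgroup.relIndex_mul_relIndex _ _ _ hH'H hHK] at hr
  rw [← AddSubgroup.relIndex_mul_relIndex _ _ _ hH'H hHK]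
  set a := H'.relIndex H
  set b := H.relIndex K
  have ha : 1 ≤ a := Nat.pos_of_mul_pos_left (natCard_mul_relIndex hH'H ▸ Nat.card_pos)
  have hab : a + b ≤ a * b + 1 := by nlinarith
  have hb : b ≤ a * b := Nat.le_mul_of_pos_left b ha
  have hm : 2 * (a * b) ≤ Nat.card H' * (a * b) :=
    Nat.mul_le_mul_right _ ((AddSubgroup.one_lt_card_iff_ne_bot H').mpr hH')
  omega

end Index

section Stabilizer

variable {G : Type*} [AddCommGroup G] [DecidableEq G]

theorem stabilizer_le_stabilizer_add (B T : Finset G) :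
    stabilizer G T ≤ stabilizer G (B + T) := fun a ha => by
  rw [mem_stabilizer_iff, ← add_vadd_comm, mem_stabilizer_iff.mp ha]

theorem stabilizer_le_stabilizer_vadd (b : G) (T : Finset G) :
    stabilizer G T ≤ stabilizer G (b +ᵥ T) := fun a ha => by
  rw [mem_stabilizer_iff, vadd_comm, mem_stabilizer_iff.mp ha]

theorem stabilizer_toFinset (L : AddSubgroup G) [Fintype (L : Set G)] :
    stabilizer G (L : Set G).toFinset = L := by
  rw [← stabilizer_coe_finset, Set.coe_toFinset, stabilizer_addSubgroup]

theorem stabilizer_le_of_subset_vadd {S : Finset G} {K : AddSubgroup G} {s : G}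
    (hS : S.Nonempty) (hSK : (S : Set G) ⊆ s +ᵥ (K : Set G)) : stabilizer G S ≤ K := by
  intro a ha
  obtain ⟨x, hx⟩ := hS
  have h₁ := (mem_leftAddCoset_iff s).mp (hSK hx)
  have h₂ := (mem_leftAddCoset_iff s).mp (hSK (mem_stabilizer_finset'.mp ha hx))
  simpa [vadd_eq_add, add_sub_cancel_right, ← add_assoc, add_comm] using K.sub_mem h₂ h₁

theorem card_add_natCard_le_of_ssubset {L : AddSubgroup G} {X Y : Finset G} (hXY : X ⊂ Y)
    (hX : L ≤ stabilizer G X) (hY : L ≤ stabilizer G Y) : X.card + Nat.card L ≤ Y.card := by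
  obtain ⟨y, hyY, hyX⟩ := Finset.exists_of_ssubset hXY
  have hmem : ∀ l : L, (l : G) + y ∈ Y \ X := fun l => by
    refine Finset.mem_sdiff.mpr ⟨mem_stabilizer_finset'.mp (hY l.2) hyY, fun h => hyX ?_⟩
    simpa using mem_stabilizer_finset'.mp (hX (L.neg_mem l.2)) h
  have hcard : Nat.card L ≤ (Y \ X).card := by
    simpa only [Nat.card_eq_finsetCard] using
      Nat.card_le_card_of_injective (fun l : L => (⟨l + y, hmem l⟩ : (Y \ X : Finset G)))
        fun l l' h => Subtype.ext (add_right_cancel (congrArg Subtype.val h))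
  rw [← Finset.card_sdiff_add_card_eq_card hXY.subset]
  omega

theorem card_add_natCard_stabilizer_le {B T : Finset G} (hB : B.Nonempty)
    (hBT : ¬ ∃ c : G, (B : Set G) ⊆ c +ᵥ (stabilizer G T : Set G)) :
    T.card + Nat.card (stabilizer G T) ≤ (B + T).card := by
  obtain ⟨b, hb⟩ := hB
  have hne : b +ᵥ T ≠ B + T := fun h => hBT ⟨b, fun x hx => by
    rw [mem_leftAddCoset_iff, SetLike.mem_coe, mem_stabilizer_finset_iff_vadd_finset_subset]
    calc (-b + x) +ᵥ T = -b +ᵥ (x +ᵥ T) := add_vadd _ _ _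
      _ ⊆ -b +ᵥ (B + T) :=
        Finset.vadd_finset_subset_vadd_finset (Finset.vadd_finset_subset_add hx)
      _ = T := by rw [← h, neg_vadd_vadd]⟩
  simpa [Finset.card_vadd_finset] using card_add_natCard_le_of_ssubset
    ((Finset.vadd_finset_subset_add hb).ssubset_of_ne hne) (stabilizer_le_stabilizer_vadd b T)
    (stabilizer_le_stabilizer_add B T)

theorem card_add_mul_card_le_card_add_sum {L : AddSubgroup G} {T : Finset G}
    {𝒞 : Multiset (Finset G)}
    (h𝒞 : ∀ C ∈ 𝒞, C.Nonempty ∧ ¬ ∃ c : G, (C : Set G) ⊆ c +ᵥ (L : Set G))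
    (hT : L ≤ stabilizer G T) (hL : stabilizer G (T + 𝒞.sum) ≤ L) :
    T.card + Nat.card L * Multiset.card 𝒞 ≤ (T + 𝒞.sum).card := by
  induction 𝒞 using Multiset.induction generalizing T with
  | empty => simp
  | cons C 𝒞 ih =>
    rw [Multiset.sum_cons, ← add_assoc, add_comm T C] at hL ⊢
    have hCT : stabilizer G (C + T) ≤ L :=
      (stabilizer_le_stabilizer_add 𝒞.sum (C + T)).trans (add_comm (C + T) 𝒞.sum ▸ hL)
    have hstab : stabilizer G T = L :=
      le_antisymm ((stabilizer_le_stabilizer_add C T).trans hCT) hT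
    obtain ⟨hC, hCL⟩ := h𝒞 C (Multiset.mem_cons_self C 𝒞)
    have hstep := card_add_natCard_stabilizer_le hC (hstab ▸ hCL)
    have hrest := ih (fun D hD => h𝒞 D (Multiset.mem_cons_of_mem hD))
      (hT.trans (stabilizer_le_stabilizer_add C T)) hL
    rw [hstab] at hstep
    rw [Multiset.card_cons, mul_add_one]
    omega

theorem Multiset.sum_nonempty {𝒞 : Multiset (Finset G)} (h : ∀ C ∈ 𝒞, C.Nonempty) :
    𝒞.sum.Nonempty := by
  induction 𝒞 using Multiset.induction with
  | empty => exact Finset.singleton_nonempty 0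
  | cons C 𝒞 ih =>
    rw [Multiset.sum_cons]
    exact (h C (mem_cons_self C 𝒞)).add (ih fun D hD => h D (mem_cons_of_mem hD))

theorem exists_sum_subset_vadd {K : AddSubgroup G} {𝒞 : Multiset (Finset G)}
    (h : ∀ C ∈ 𝒞, ∃ c : G, (C : Set G) ⊆ c +ᵥ (K : Set G)) :
    ∃ s : G, (𝒞.sum : Set G) ⊆ s +ᵥ (K : Set G) := by
  induction 𝒞 using Multiset.induction with
  | empty => exact ⟨0, by simp⟩
  | cons C 𝒞 ih =>
    obtain ⟨c, hc⟩ := h C (Multiset.mem_cons_self C 𝒞)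
    obtain ⟨s, hs⟩ := ih fun D hD => h D (Multiset.mem_cons_of_mem hD)
    refine ⟨c + s, fun x hx => ?_⟩
    rw [Multiset.sum_cons, Finset.coe_add] at hx
    obtain ⟨y, hy, z, hz, rfl⟩ := hx
    have hyz : -(c + s) + (y + z) = (-c + y) + (-s + z) := by abel
    rw [mem_leftAddCoset_iff, hyz]
    exact K.add_mem ((mem_leftAddCoset_iff c).mp (hc hy)) ((mem_leftAddCoset_iff s).mp (hs hz))

theorem card_sum_le_card_sum_of_le {𝒞 𝒟 : Multiset (Finset G)} (h : 𝒞 ≤ 𝒟)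
    (h𝒟 : ∀ D ∈ 𝒟, D.Nonempty) : 𝒞.sum.card ≤ 𝒟.sum.card := by
  obtain ⟨ℰ, rfl⟩ := Multiset.le_iff_exists_add.mp h
  rw [Multiset.sum_add]
  exact Finset.card_le_card_add_right
    (Multiset.sum_nonempty fun D hD => h𝒟 D (Multiset.mem_add.mpr (Or.inr hD)))

theorem exists_le_sum_eq_vadd {𝒞 : Multiset (Finset G)} (h : ∀ C ∈ 𝒞, C.Nonempty) :
    ∃ 𝒞₀ ≤ 𝒞, ∃ t : G, 𝒞.sum = t +ᵥ 𝒞₀.sum ∧ Multiset.card 𝒞₀ + 1 ≤ 𝒞₀.sum.card := by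
  induction 𝒞 using Multiset.induction with
  | empty => exact ⟨0, le_rfl, 0, by simp, by simp⟩
  | cons C 𝒞 ih =>
    obtain ⟨𝒞₀, h𝒞₀, t, ht, hcard⟩ := ih fun D hD => h D (Multiset.mem_cons_of_mem hD)
    have hsum : (C ::ₘ 𝒞).sum = t +ᵥ (C + 𝒞₀.sum) := by
      rw [Multiset.sum_cons, ht, add_vadd_comm]
    by_cases hgrow : 𝒞₀.sum.card < (C + 𝒞₀.sum).card
    · refine ⟨C ::ₘ 𝒞₀, Multiset.cons_le_cons C h𝒞₀, t, by rw [hsum, Multiset.sum_cons], ?_⟩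
      rw [Multiset.card_cons, Multiset.sum_cons]
      omega
    · obtain ⟨c, hc⟩ := h C (Multiset.mem_cons_self C 𝒞)
      have hC : C + 𝒞₀.sum = c +ᵥ 𝒞₀.sum := (Finset.eq_of_subset_of_card_le
        (Finset.vadd_finset_subset_add hc) (by rw [Finset.card_vadd_finset]; omega)).symm
      exact ⟨𝒞₀, h𝒞₀.trans (Multiset.le_cons_self 𝒞 C), t + c, by rw [hsum, hC, vadd_vadd],
        hcard⟩

variable [Fintype G] {K : AddSubgroup G} {𝒜 : Multiset (Finset G)}

theorem exists_le_card_eq_and_card_sum_eq (hne : ∀ B ∈ 𝒜, B.Nonempty)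
    (hcoset : ∀ B ∈ 𝒜, ∃ c : G, (B : Set G) ⊆ c +ᵥ (K : Set G))
    (hS : 𝒜.sum.card = Nat.card K) (hr : Nat.card K - 1 ≤ Multiset.card 𝒜) :
    ∃ 𝒜'' ≤ 𝒜, Multiset.card 𝒜'' = Nat.card K - 1 ∧ 𝒜''.sum.card = Nat.card K := by
  obtain ⟨𝒜₀, h𝒜₀, t, ht, hcard₀⟩ := exists_le_sum_eq_vadd hne
  have hS₀ : 𝒜₀.sum.card = Nat.card K := by rw [← hS, ht, Finset.card_vadd_finset]
  obtain ⟨𝒜'', h₀, h𝒜'', hcard⟩ := Multiset.exists_le_le_card_eq h𝒜₀ (by omega) hr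
  have hmem : ∀ B ∈ 𝒜'', B ∈ 𝒜 := fun B hB => Multiset.mem_of_le h𝒜'' hB
  obtain ⟨s, hs⟩ := exists_sum_subset_vadd fun B hB => hcoset B (hmem B hB)
  refine ⟨𝒜'', h𝒜'', hcard, le_antisymm (card_le_natCard_of_subset_vadd hs) ?_⟩
  exact hS₀ ▸ card_sum_le_card_sum_of_le h₀ fun B hB => hne B (hmem B hB)

theorem card_sum_add_natCard_stabilizer_le {s : G} (hlt : 𝒜.sum.card < Nat.card K)
    (hs : (𝒜.sum : Set G) ⊆ s +ᵥ (K : Set G)) (hHK : stabilizer G 𝒜.sum ≤ K) :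
    𝒜.sum.card + Nat.card (stabilizer G 𝒜.sum) ≤ Nat.card K := by
  classical
  have hcard : (s +ᵥ (K : Set G).toFinset).card = Nat.card K := by
    rw [Finset.card_vadd_finset, ← Nat.card_eq_card_toFinset]; rfl
  have hsub : 𝒜.sum ⊆ s +ᵥ (K : Set G).toFinset := by
    rw [← Finset.coe_subset, Finset.coe_vadd_finset, Set.coe_toFinset]; exact hs
  have hK : stabilizer G 𝒜.sum ≤ stabilizer G (s +ᵥ (K : Set G).toFinset) :=
    hHK.trans ((stabilizer_toFinset K).ge.trans (stabilizer_le_stabilizer_vadd s _))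
  rw [← hcard] at hlt ⊢
  exact card_add_natCard_le_of_ssubset (hsub.ssubset_of_ne (ne_of_apply_ne Finset.card hlt.ne))
    le_rfl hK

theorem natCard_stabilizer_mul_le_card_sum {ℬ : Multiset (Finset G)}
    (hne : ∀ B ∈ 𝒜, B.Nonempty) (hℬ : ℬ ≤ 𝒜)
    (hℬH : ∀ B ∈ ℬ, ¬ ∃ c : G, (B : Set G) ⊆ c +ᵥ (stabilizer G 𝒜.sum : Set G)) :
    Nat.card (stabilizer G 𝒜.sum) * (1 + Multiset.card ℬ) ≤ 𝒜.sum.card := by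
  classical
  set H := stabilizer G 𝒜.sum
  set T := (𝒜 - ℬ).sum + (H : Set G).toFinset
  have hT : H ≤ stabilizer G T :=
    (stabilizer_toFinset H).ge.trans (stabilizer_le_stabilizer_add _ _)
  have hsum : T + ℬ.sum = 𝒜.sum := by
    rw [add_right_comm, ← Multiset.sum_add, tsub_add_cancel_of_le hℬ, ← Finset.coe_inj,
      Finset.coe_add, Set.coe_toFinset]
    simpa only [stabilizer_coe_finset] using add_stabilizer_self (𝒜.sum : Set G)
  have hgrow := card_add_mul_card_le_card_add_sum
    (fun B hB => ⟨hne B (Multiset.mem_of_le hℬ hB), hℬH B hB⟩) hT (by rw [hsum])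
  have hTcard : Nat.card H ≤ T.card := (Nat.card_eq_card_toFinset (H : Set G)).trans_le
    (Finset.card_le_card_add_left (Multiset.sum_nonempty fun B hB =>
      hne B (Multiset.mem_of_le (Multiset.sub_le_self 𝒜 ℬ) hB)))
  rw [hsum] at hgrow
  rw [mul_one_add]
  omega

theorem card_add_two_le_relIndex_stabilizer {ℬ : Multiset (Finset G)}
    (hne : ∀ B ∈ 𝒜, B.Nonempty) (hcoset : ∀ B ∈ 𝒜, ∃ c : G, (B : Set G) ⊆ c +ᵥ (K : Set G))
    (hlt : 𝒜.sum.card < Nat.card K) (hℬ : ℬ ≤ 𝒜)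
    (hℬH : ∀ B ∈ ℬ, ¬ ∃ c : G, (B : Set G) ⊆ c +ᵥ (stabilizer G 𝒜.sum : Set G)) :
    Multiset.card ℬ + 2 ≤ (stabilizer G 𝒜.sum).relIndex K := by
  obtain ⟨s, hs⟩ := exists_sum_subset_vadd hcoset
  have hHK := stabilizer_le_of_subset_vadd (Multiset.sum_nonempty hne) hs
  have hupper := card_sum_add_natCard_stabilizer_le hlt hs hHK
  have hlower := natCard_stabilizer_mul_le_card_sum hne hℬ hℬH
  refine Nat.le_of_mul_le_mul_left ?_ (Nat.card_pos (α := stabilizer G 𝒜.sum))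
  rw [natCard_mul_relIndex hHK]
  linarith

end Stabilizer

/-- Key lemma on setpartitions whose sets lie in `K`-cosets. -/
theorem key_lemma (G : Type*) [AddCommGroup G] [Fintype G] [DecidableEq G]
    (K : AddSubgroup G) (hK : K ≠ ⊥)
    (𝒜 : Multiset (Finset G))
    (hcard : ∀ B ∈ 𝒜, 2 ≤ B.card)
    (hcoset : ∀ B ∈ 𝒜, ∃ c : G, (B : Set G) ⊆ c +ᵥ (K : Set G))
    (hr : Nat.card K - 1 ≤ 𝒜.card) :
    ∃ H : AddSubgroup G, H ≠ ⊥ ∧ H ≤ K ∧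
      ∃ 𝒜' ≤ 𝒜, ∃ 𝒜'' ≤ 𝒜',
        𝒜''.card = Nat.card H - 1 ∧
        min 𝒜.card (𝒜.card - H.relIndex K + 2) ≤ 𝒜'.card ∧
        (𝒜''.sum).card = Nat.card H ∧
        ∀ B ∈ 𝒜', ∃ c : G, (B : Set G) ⊆ c +ᵥ (H : Set G) := by
  classical
  induction hn : Nat.card K using Nat.strong_induction_on generalizing K 𝒜 with
  | _ n ih =>
  subst hn
  have hne : ∀ B ∈ 𝒜, B.Nonempty := fun B hB => Finset.card_pos.mp (by linarith [hcard B hB])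
  obtain ⟨s, hs⟩ := exists_sum_subset_vadd hcoset
  rcases (card_le_natCard_of_subset_vadd hs).lt_or_eq with hlt | heq
  · have hHK := stabilizer_le_of_subset_vadd (Multiset.sum_nonempty hne) hs
    have hH : stabilizer G 𝒜.sum ≠ ⊥ := fun hbot => by
      have hall := card_add_two_le_relIndex_stabilizer hne hcoset hlt le_rfl fun B hB => by
        rw [hbot]; exact not_subset_vadd_bot (hcard B hB)
      rw [hbot, AddSubgroup.relIndex_bot_left] at hall
      omega
    set H := stabilizer G 𝒜.sum
    set 𝒜₁ := 𝒜.filter fun B : Finset G => ∃ c : G, (B : Set G) ⊆ c +ᵥ (H : Set G)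
    set ℬ := 𝒜.filter fun B : Finset G => ¬ ∃ c : G, (B : Set G) ⊆ c +ᵥ (H : Set G)
    have he : Multiset.card ℬ + 2 ≤ H.relIndex K := card_add_two_le_relIndex_stabilizer hne
      hcoset hlt (Multiset.filter_le _ _) fun B hB => (Multiset.mem_filter.mp hB).2
    have hsplit : Multiset.card 𝒜₁ + Multiset.card ℬ = Multiset.card 𝒜 := by
      rw [← Multiset.card_add, Multiset.filter_add_not]
    obtain ⟨H', hH', hH'H, 𝒜', h𝒜', 𝒜'', h𝒜'', hc'', hmin, hsum'', hcoset'⟩ :=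
      ih _ (natCard_lt_of_two_le_relIndex hHK (by omega)) H hH 𝒜₁
        (fun B hB => hcard B (Multiset.mem_filter.mp hB).1)
        (fun B hB => (Multiset.mem_filter.mp hB).2)
        (natCard_sub_one_le_of_relIndex hHK hsplit he hr) rfl
    exact ⟨H', hH', hH'H.trans hHK, 𝒜', h𝒜'.trans (Multiset.filter_le _ _), 𝒜'', h𝒜'', hc'',
      min_le_of_relIndex hH' hH'H hHK hsplit he hr hmin, hsum'', hcoset'⟩
  · obtain ⟨𝒜'', h𝒜'', hc'', hsum''⟩ := exists_le_card_eq_and_card_sum_eq hne hcoset heq hr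
    exact ⟨K, hK, le_rfl, 𝒜, le_rfl, 𝒜'', h𝒜'', hc'', by simp, hsum'', hcoset⟩
end

section
/- Let G be a finite abelian group, K ≤ G a subgroup, and 𝒜 = A_1⋯A_r a setpartition over G such that the sumset A_1 + ⋯ + A_r equals a full coset of K (i.e., |A_1 + ⋯ + A_r| = |K| and each A_i is contained in a single K-coset with |A_i| ≥ 2). If r ≥ |K| − 1, then there is a sub-setpartition of length exactly |K| − 1 whose sumset still has cardinality |K|. -/
/-!
Adding the sets one at a time, the sumset never shrinks. If it grew at every step, `r` sets
would produce at least `r + 1` elements; so while `r > |K| - 1` some set `A` leaves the size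
unchanged, the sumset is then `a + (sumset of the others)` for any `a ∈ A`, and `A` can be
dropped.
-/

open scoped Pointwise

section

variable {G : Type*} [AddCommGroup G] [DecidableEq G]

theorem Finset.add_eq_vadd_of_card_add_le {A S : Finset G} {a : G} (ha : a ∈ A)
    (h : (A + S).card ≤ S.card) : A + S = a +ᵥ S :=
  (eq_of_subset_of_card_le (vadd_finset_subset_add ha) (by rwa [card_vadd_finset])).symm

namespace Multiset

theorem exists_sum_eq_vadd_sum_or_card_lt_card_sum (𝒜 : Multiset (Finset G))
    (h𝒜 : ∀ A ∈ 𝒜, A.Nonempty) :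
    (∃ A t, 𝒜 = A ::ₘ t ∧ ∃ g : G, 𝒜.sum = g +ᵥ t.sum) ∨ 𝒜.card < 𝒜.sum.card := by
  induction 𝒜 using Multiset.induction with
  | empty => right; simp
  | cons A t ih =>
    rcases ih fun B hB => h𝒜 B (mem_cons_of_mem hB) with ⟨B, t', rfl, g, hg⟩ | hlt
    · left
      refine ⟨B, A ::ₘ t', cons_swap A B t', g, ?_⟩
      rw [sum_cons, hg, sum_cons, add_vadd_comm]
    · obtain ⟨a, ha⟩ := h𝒜 A (mem_cons_self A t)
      by_cases hstep : (A + t.sum).card ≤ t.sum.card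
      · exact .inl ⟨A, t, rfl, a, by rw [sum_cons, Finset.add_eq_vadd_of_card_add_le ha hstep]⟩
      · right
        rw [card_cons, sum_cons]
        omega

theorem exists_le_card_eq_and_card_sum_eq (𝒜 : Multiset (Finset G))
    (h𝒜 : ∀ A ∈ 𝒜, A.Nonempty) {n : ℕ} (hn : n ≤ 𝒜.card) (hsum : 𝒜.sum.card ≤ n + 1) :
    ∃ ℬ ≤ 𝒜, ℬ.card = n ∧ ℬ.sum.card = 𝒜.sum.card := by
  induction 𝒜 using Multiset.strongInductionOn with
  | ih 𝒜 ih =>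
    rcases hn.eq_or_lt with rfl | hlt
    · exact ⟨𝒜, le_rfl, rfl, rfl⟩
    rcases exists_sum_eq_vadd_sum_or_card_lt_card_sum 𝒜 h𝒜 with ⟨A, t, rfl, g, hg⟩ | hgrow
    · have hsum_t : t.sum.card = (A ::ₘ t).sum.card := by rw [hg, Finset.card_vadd_finset]
      obtain ⟨ℬ, hle, hcard, hℬ⟩ := ih t (lt_cons_self t A)
        (fun B hB => h𝒜 B (mem_cons_of_mem hB)) (by rw [card_cons] at hlt; omega) (by omega)
      exact ⟨ℬ, hle.trans (le_cons_self t A), hcard, hℬ.trans hsum_t⟩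
    · omega

end Multiset

end

theorem greedy_sub_setpartition_general (G : Type*) [AddCommGroup G]
    [DecidableEq G] (K : AddSubgroup G)
    (𝒜 : Multiset (Finset G))
    (hcard : ∀ B ∈ 𝒜, 2 ≤ B.card)
    (hfull : (𝒜.sum).card = Nat.card K)
    (hr : Nat.card K - 1 ≤ 𝒜.card) :
    ∃ ℬ ≤ 𝒜, ℬ.card = Nat.card K - 1 ∧ (ℬ.sum).card = Nat.card K := by
  have h𝒜 : ∀ B ∈ 𝒜, B.Nonempty := fun B hB => Finset.card_pos.1 (by linarith [hcard B hB])
  obtain ⟨ℬ, hle, hcardℬ, hsum⟩ :=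
    Multiset.exists_le_card_eq_and_card_sum_eq 𝒜 h𝒜 hr (by omega)
  exact ⟨ℬ, hle, hcardℬ, hsum.trans hfull⟩

/-- Greedy fact: if the sumset of `r ≥ |K| − 1` sets, each of size `≥ 2` and
contained in a single `K`-coset, covers a full `K`-coset, then already
`|K| − 1` of the sets have sumset of cardinality `|K|`. -/
theorem greedy_sub_setpartition (G : Type*) [AddCommGroup G] [Fintype G]
    [DecidableEq G] (K : AddSubgroup G)
    (𝒜 : Multiset (Finset G))
    (hcard : ∀ B ∈ 𝒜, 2 ≤ B.card)
    (hcoset : ∀ B ∈ 𝒜, ∃ c : G, (B : Set G) ⊆ c +ᵥ (K : Set G))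
    (hfull : (𝒜.sum).card = Nat.card K)
    (hr : Nat.card K - 1 ≤ 𝒜.card) :
    ∃ ℬ ≤ 𝒜, ℬ.card = Nat.card K - 1 ∧ (ℬ.sum).card = Nat.card K :=
  greedy_sub_setpartition_general G K 𝒜 hcard hfull hr
end
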